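/- arXiv:2408.04509 — 2 statements merged into one kernel-verified Lean document; each statement's English description precedes it below -/
import Mathlib

section
/- If an opaque announcement Π has a problem R with two distinct outcomes x, y ∈ Π(R) where some individual i satisfies x P_i y, and the domain is rich, then Π does not guarantee strategy-proofness: there exists a possible mechanism given Π that is not strategy-proof. -/
def strictPref {X : Type} (r : X → X → Prop) (x y : X) : Prop := r x y ∧ ¬ r y x

def StrategyProof {I X : Type} (Rs : Set (I → X → X → Prop))
    (φ : (I → X → X → Prop) → X) : Prop :=
  ∀ (i : I) (R R' : I → X → X → Prop), R ∈ Rs → R' ∈ Rs →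
    (∀ j : I, j ≠ i → R j = R' j) → R i (φ R) (φ R')

def Rich {I X : Type} [DecidableEq I] (Rs : Set (I → X → X → Prop)) : Prop :=
  ∀ R ∈ Rs, ∀ (i : I) (x y : X), strictPref (R i) x y →
    ∃ Ri' : X → X → Prop, Ri' ≠ R i ∧ Function.update R i Ri' ∈ Rs ∧
      ∀ z : X, strictPref (R i) x z → strictPref Ri' x z

/-!
Richness lets individual `i` report `R'ᵢ ≠ Rᵢ` keeping `x` above everything it beat under `Rᵢ`.
An opaque announcement only constrains each problem separately, so a mechanism may choose any
`z ∈ Π(R')` at `R'` and, at `R`, either `x` or `y` depending on how `Rᵢ` ranks `y` against `z`.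
If `y Rᵢ z`, choose `x`: then `x P'ᵢ z`, and `i` gains at `R'` by reporting `Rᵢ`.
Otherwise choose `y`: then `i` gains at `R` by reporting `R'ᵢ`.
-/

theorem strictPref_of_strictPref_of_rel {X : Type} {r : X → X → Prop} (htr : Transitive r)
    {x y z : X} (hxy : strictPref r x y) (hyz : r y z) : strictPref r x z :=
  ⟨htr hxy.1 hyz, fun hzx => hxy.2 (htr hyz hzx)⟩

theorem exists_selection_eq_eq {P X : Type} (Rs : Set P) (Ann : P → Set X)
    (hne : ∀ S ∈ Rs, (Ann S).Nonempty) {R R' : P} (hRR' : R ≠ R')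
    {a b : X} (ha : a ∈ Ann R) (hb : b ∈ Ann R') :
    ∃ φ : P → X, (∀ S ∈ Rs, φ S ∈ Ann S) ∧ φ R = a ∧ φ R' = b := by
  classical
  let φ₀ : P → X := fun S => if h : (Ann S).Nonempty then h.some else a
  refine ⟨Function.update (Function.update φ₀ R' b) R a, fun S hS => ?_, by simp, by simp [hRR'.symm]⟩
  by_cases hSR : S = R
  · subst hSR; simpa using ha
  by_cases hSR' : S = R'
  · subst hSR'; simpa [hSR] using hb
  simpa [hSR, hSR', φ₀, hne S hS] using (hne S hS).some_mem

theorem stmt4_general {I X : Type} [DecidableEq I]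
    (Rs : Set (I → X → X → Prop))
    (hrich : Rich Rs)
    (hpref : ∀ R ∈ Rs, ∀ i : I, Transitive (R i) ∧ Total (R i))
    (Ann : (I → X → X → Prop) → Set X)
    (hne : ∀ R ∈ Rs, (Ann R).Nonempty)
    (R : I → X → X → Prop) (hR : R ∈ Rs)
    (x y : X) (hx : x ∈ Ann R) (hy : y ∈ Ann R)
    (i : I) (hPi : strictPref (R i) x y) :
    ∃ φ : (I → X → X → Prop) → X,
      (∀ S ∈ Rs, φ S ∈ Ann S) ∧ ¬ StrategyProof Rs φ := by
  obtain ⟨Ri', hRi', hR', hkeep⟩ := hrich R hR i x y hPi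
  set R' := Function.update R i Ri'
  have hR'i : R' i = Ri' := Function.update_self i Ri' R
  have hRR' : R ≠ R' := fun h => hRi' (by rw [← hR'i, h])
  have hagree : ∀ j, j ≠ i → R' j = R j := fun j hj => Function.update_of_ne hj _ _
  obtain ⟨z, hz⟩ := hne R' hR'
  by_cases hyz : R i y z
  · obtain ⟨φ, hφ, hφR, hφR'⟩ := exists_selection_eq_eq Rs Ann hne hRR' hx hz
    refine ⟨φ, hφ, fun hsp => ?_⟩
    have hxz : strictPref (R' i) x z :=
      hR'i ▸ hkeep z (strictPref_of_strictPref_of_rel (hpref R hR i).1 hPi hyz)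
    have hzx := hsp i R' R hR' hR hagree
    rw [hφR, hφR'] at hzx
    exact hxz.2 hzx
  · obtain ⟨φ, hφ, hφR, hφR'⟩ := exists_selection_eq_eq Rs Ann hne hRR' hy hz
    refine ⟨φ, hφ, fun hsp => hyz ?_⟩
    simpa [hφR, hφR'] using hsp i R R' hR hR' fun j hj => (hagree j hj).symm

/-- an opaque announcement with two comparably ranked possible outcomes
at some problem does not guarantee strategy-proofness. -/
theorem stmt4 {I X : Type} [DecidableEq I] [Fintype I] [Fintype X]
    (Rs : Set (I → X → X → Prop))
    (hrich : Rich Rs)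
    (hpref : ∀ R ∈ Rs, ∀ i : I, Transitive (R i) ∧ Total (R i))
    (Ann : (I → X → X → Prop) → Set X)
    (hne : ∀ R ∈ Rs, (Ann R).Nonempty)
    (R : I → X → X → Prop) (hR : R ∈ Rs)
    (x y : X) (hxy : x ≠ y) (hx : x ∈ Ann R) (hy : y ∈ Ann R)
    (i : I) (hPi : strictPref (R i) x y) :
    ∃ φ : (I → X → X → Prop) → X,
      (∀ S ∈ Rs, φ S ∈ Ann S) ∧ ¬ StrategyProof Rs φ :=
  stmt4_general Rs hrich hpref Ann hne R hR x y hx hy i hPi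
end

section
/- In the single-individual setting with strict preferences, let x_n = x(P) be the most-preferred improved outcome at P ≠ P̄. Then either x_n ≠ x_1 and x_n is the P-top outcome, or there exists an index m < n − 1 such that P ranks x_1, x_2, …, x_m in that order at the top followed immediately by x_n. -/
/-- A strict linear order (strict total order) on `X`. -/
def SLO {X : Type} (P : X → X → Prop) : Prop :=
  (∀ x y : X, x ≠ y → P x y ∨ P y x) ∧ Transitive P ∧ Irreflexive P

/-- The reference ranking `P̄`: `x_1 P̄ x_2 P̄ … P̄ x_N` (0-indexed: smaller index preferred). -/
def Pbar {N : ℕ} : Fin N → Fin N → Prop := fun a b => a < b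

/-- The rank of `x` under `P`: the number of outcomes strictly preferred to `x`. -/
noncomputable def rankOf {N : ℕ} (P : Fin N → Fin N → Prop) (x : Fin N) : ℕ :=
  Nat.card {y : Fin N // P y x}

/-- `x` strictly improves its rank under `P` relative to `P̄`. -/
def improves {N : ℕ} (P : Fin N → Fin N → Prop) (x : Fin N) : Prop :=
  rankOf P x < rankOf (Pbar (N := N)) x

/-- `z` is `x(P)`: the `P`-most-preferred outcome among those whose rank improved. -/
def topImproved {N : ℕ} (P : Fin N → Fin N → Prop) (z : Fin N) : Prop :=
  improves P z ∧ ∀ w : Fin N, improves P w → ¬ P w z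

/-!
Every outcome `P`-ranked above `z = x(P)` is unimproved, so the outcome of `P`-rank
`k < rankOf P z` has (0-based) index at most `k`. As `rankOf P` is a permutation of `Fin N`,
strong induction on `k` forces that index to be `k`: above `z`, `P` lists `x_1, x_2, …` in order.
If nothing is above `z`, it is the `P`-top, and it is not `x_1` since its rank improved.
-/

theorem apply_eq_self_of_injective_of_apply_le {α : Type*} [LinearOrder α] [WellFoundedLT α]
    {σ : α → α} (hσ : Function.Injective σ) {r : α} (hle : ∀ k < r, σ k ≤ k) :
    ∀ k < r, σ k = k := by
  intro k
  induction k using WellFoundedLT.induction with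
  | _ k ih =>
    intro hk
    refine (hle k hk).antisymm (not_lt.mp fun hlt => hlt.ne (hσ ?_))
    exact ih (σ k) hlt (hlt.trans hk)

section rankOf

variable {N : ℕ} {P : Fin N → Fin N → Prop}

theorem rankOf_eq_ncard (P : Fin N → Fin N → Prop) (x : Fin N) :
    rankOf P x = {y | P y x}.ncard :=
  Nat.card_coe_set_eq _

theorem rankOf_Pbar (x : Fin N) : rankOf Pbar x = x := by
  rw [rankOf_eq_ncard]
  change (Set.Iio x).ncard = x
  simp [Set.ncard_eq_toFinset_card']

theorem improves_iff {x : Fin N} : improves P x ↔ rankOf P x < x := by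
  rw [improves, rankOf_Pbar]

theorem SLO.rankOf_lt_rankOf (hP : SLO P) {a b : Fin N} (hab : P a b) :
    rankOf P a < rankOf P b := by
  rw [rankOf_eq_ncard, rankOf_eq_ncard]
  refine Set.ncard_lt_ncard ⟨fun y hy => hP.2.1 hy hab, fun hsub => hP.2.2 a (hsub hab)⟩
    (Set.toFinite _)

theorem SLO.rel_of_rankOf_lt_rankOf (hP : SLO P) {a b : Fin N}
    (h : rankOf P a < rankOf P b) : P a b := by
  have hne : a ≠ b := by rintro rfl; exact h.false
  exact (hP.1 a b hne).resolve_right fun hba => (hP.rankOf_lt_rankOf hba).not_gt h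

theorem SLO.rankOf_lt (hP : SLO P) (x : Fin N) : rankOf P x < N := by
  calc rankOf P x = {y | P y x}.ncard := rankOf_eq_ncard P x
    _ < (Set.univ : Set (Fin N)).ncard :=
      Set.ncard_lt_ncard ⟨Set.subset_univ _, fun hsub => hP.2.2 x (hsub (Set.mem_univ x))⟩
    _ = N := by simp

theorem SLO.rankOf_injective (hP : SLO P) : Function.Injective (rankOf P) := by
  intro a b hab
  by_contra hne
  rcases hP.1 a b hne with h | h
  · exact (hP.rankOf_lt_rankOf h).ne hab
  · exact (hP.rankOf_lt_rankOf h).ne hab.symm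

noncomputable def SLO.rankEquiv (hP : SLO P) : Fin N ≃ Fin N :=
  Equiv.ofBijective (fun x => ⟨rankOf P x, hP.rankOf_lt x⟩) <|
    Finite.injective_iff_bijective.mp fun _ _ h => hP.rankOf_injective (Fin.val_eq_of_eq h)

theorem SLO.val_rankEquiv (hP : SLO P) (x : Fin N) : (hP.rankEquiv x : ℕ) = rankOf P x :=
  rfl

end rankOf

theorem stmt8_general {N : ℕ} (P : Fin N → Fin N → Prop) (hP : SLO P)
    (z : Fin N) (hz : topImproved P z) :
    (z ≠ (⟨0, z.pos⟩ : Fin N) ∧ ∀ y : Fin N, y ≠ z → P z y) ∨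
    (∃ m : ℕ, 1 ≤ m ∧ m < (z : ℕ) ∧
      (∀ j : Fin N, (j : ℕ) < m → rankOf P j = (j : ℕ)) ∧ rankOf P z = m) := by
  obtain ⟨hz_improves, hz_top⟩ := hz
  have hrz : rankOf P z < z := improves_iff.mp hz_improves
  set e := hP.rankEquiv
  have hsymm_le : ∀ k < e z, e.symm k ≤ k := fun k hk => by
    have hrank : rankOf P (e.symm k) = k := by rw [← hP.val_rankEquiv, e.apply_symm_apply]
    have hlt : rankOf P (e.symm k) < rankOf P z := hrank ▸ hk
    have hnot : ¬ improves P (e.symm k) :=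
      fun h => hz_top _ h (hP.rel_of_rankOf_lt_rankOf hlt)
    rw [improves_iff, not_lt, hrank] at hnot
    exact hnot
  have hfixed : ∀ j : Fin N, (j : ℕ) < rankOf P z → rankOf P j = j := fun j hj => by
    have := apply_eq_self_of_injective_of_apply_le e.symm.injective hsymm_le j hj
    rw [← hP.val_rankEquiv, ← e.symm_apply_eq.mp this]
  rcases Nat.eq_zero_or_pos (rankOf P z) with h0 | hpos
  · refine Or.inl ⟨fun h => by simp [h] at hrz, fun y hy => hP.rel_of_rankOf_lt_rankOf ?_⟩
    exact h0 ▸ Nat.pos_of_ne_zero fun hy0 => hy (hP.rankOf_injective (hy0.trans h0.symm))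
  · exact Or.inr ⟨rankOf P z, hpos, hrz, hfixed, rfl⟩

/-- the most-preferred improved outcome `x_n = x(P)` is either the
`P`-top outcome (and not `x_1`), or preceded exactly by `x_1, …, x_m` for some
index `m < n − 1` (1-indexed; here `1 ≤ m` and `m < z.val` 0-indexed). -/
theorem stmt8 {N : ℕ} (P : Fin N → Fin N → Prop) (hP : SLO P) (hne : P ≠ Pbar)
    (z : Fin N) (hz : topImproved P z) :
    (z ≠ (⟨0, z.pos⟩ : Fin N) ∧ ∀ y : Fin N, y ≠ z → P z y) ∨
    (∃ m : ℕ, 1 ≤ m ∧ m < (z : ℕ) ∧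
      (∀ j : Fin N, (j : ℕ) < m → rankOf P j = (j : ℕ)) ∧ rankOf P z = m) :=
  stmt8_general P hP z hz
end
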